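/- arXiv:2107.01654 — 4 statements merged into one kernel-verified Lean document; each statement's English description precedes it below -/
import Mathlib

section
/- Every weak AXp intersects every weak CXp: if X is a weak AXp for (v, c) and Y is a weak CXp for (v, c), then X ∩ Y ≠ ∅. -/
def WeakAXp {m : ℕ} (κ : (Fin m → Bool) → Bool) (v : Fin m → Bool) (c : Bool)
    (X : Set (Fin m)) : Prop :=
  ∀ x : Fin m → Bool, (∀ i ∈ X, x i = v i) → κ x = c

def WeakCXp {m : ℕ} (κ : (Fin m → Bool) → Bool) (v : Fin m → Bool) (c : Bool)
    (Y : Set (Fin m)) : Prop :=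
  ∃ x : Fin m → Bool, (∀ j ∉ Y, x j = v j) ∧ κ x ≠ c

theorem weak_axp_inter_weak_cxp {m : ℕ} (κ : (Fin m → Bool) → Bool)
    (v : Fin m → Bool) (c : Bool) (hv : κ v = c)
    (X Y : Set (Fin m)) (hX : WeakAXp κ v c X) (hY : WeakCXp κ v c Y) :
    (X ∩ Y).Nonempty := by
  obtain ⟨x, hx, hne⟩ := hY
  by_contra h
  rw [Set.not_nonempty_iff_eq_empty] at h
  exact hne (hX x (fun i hi => hx i (fun hiY => (Set.eq_empty_iff_forall_notMem.mp h i) ⟨hi, hiY⟩)))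
end

section
/- A set X ⊆ F is a weak AXp for (v, c) if and only if X is a hitting set of the collection of all weak CXps for (v, c), i.e., X intersects every weak CXp. -/
theorem weak_axp_iff_hitting_set {m : ℕ} (κ : (Fin m → Bool) → Bool)
    (v : Fin m → Bool) (c : Bool) (hv : κ v = c)
    (X : Set (Fin m)) :
    WeakAXp κ v c X ↔ ∀ Y : Set (Fin m), WeakCXp κ v c Y → (X ∩ Y).Nonempty := by
  constructor
  · rintro hA Y ⟨x, hx, hxc⟩
    by_contra hempty
    rw [Set.not_nonempty_iff_eq_empty] at hempty
    exact hxc (hA x (fun i hi => hx i (fun hiY =>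
      Set.eq_empty_iff_forall_notMem.mp hempty i ⟨hi, hiY⟩)))
  · intro h x hx
    by_contra hxc
    obtain ⟨i, hiX, hiY⟩ := h {j | x j ≠ v j} ⟨x, fun j hj => by simpa using hj, hxc⟩
    exact hiY (hx i hiX)
end

section
/- Every AXp is a minimal hitting set of the set of CXps: if X is a subset-minimal weak AXp for (v, c), then X is a minimal hitting set of the collection of all subset-minimal weak CXps for (v, c). -/
def AXp {m : ℕ} (κ : (Fin m → Bool) → Bool) (v : Fin m → Bool) (c : Bool)
    (X : Set (Fin m)) : Prop :=
  WeakAXp κ v c X ∧ ∀ Z ⊂ X, ¬ WeakAXp κ v c Z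

def CXp {m : ℕ} (κ : (Fin m → Bool) → Bool) (v : Fin m → Bool) (c : Bool)
    (Y : Set (Fin m)) : Prop :=
  WeakCXp κ v c Y ∧ ∀ Z ⊂ Y, ¬ WeakCXp κ v c Z

/-- `H` is a hitting set of the collection `𝒞`. -/
def HittingSet {m : ℕ} (𝒞 : Set (Set (Fin m))) (H : Set (Fin m)) : Prop :=
  ∀ Y ∈ 𝒞, (H ∩ Y).Nonempty

lemma exists_cxp_subset {m : ℕ} (κ : (Fin m → Bool) → Bool) (v : Fin m → Bool) (c : Bool) :
    ∀ n (Y : Set (Fin m)), Y.ncard = n → WeakCXp κ v c Y → ∃ Y' ⊆ Y, CXp κ v c Y' := by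
  intro n
  induction n using Nat.strong_induction_on with
  | _ n ih =>
    intro Y hn hY
    by_cases h : ∀ Z ⊂ Y, ¬ WeakCXp κ v c Z
    · exact ⟨Y, subset_rfl, hY, h⟩
    · push_neg at h
      obtain ⟨Z, hZY, hZ⟩ := h
      have hlt : Z.ncard < n := hn ▸ Set.ncard_lt_ncard hZY (Set.toFinite Y)
      obtain ⟨Y', hY'Z, hY'⟩ := ih _ hlt Z rfl hZ
      exact ⟨Y', hY'Z.trans hZY.subset, hY'⟩

theorem axp_is_minimal_hitting_set_of_cxps {m : ℕ} (κ : (Fin m → Bool) → Bool)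
    (v : Fin m → Bool) (c : Bool) (hv : κ v = c)
    (X : Set (Fin m)) (hX : AXp κ v c X) :
    HittingSet {Y | CXp κ v c Y} X ∧
      ∀ X' ⊂ X, ¬ HittingSet {Y | CXp κ v c Y} X' := by
  constructor
  · intro Y hY
    by_contra hdisj
    rw [Set.not_nonempty_iff_eq_empty] at hdisj
    obtain ⟨x, hx, hxc⟩ := hY.1
    apply hxc
    apply hX.1 x
    intro i hi
    apply hx
    intro hiY
    exact absurd (Set.mem_inter hi hiY) (by simp [hdisj])
  · intro X' hX'X hHS
    have hnA : ¬ WeakAXp κ v c X' := hX.2 X' hX'X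
    unfold WeakAXp at hnA
    push_neg at hnA
    obtain ⟨x, hx, hxc⟩ := hnA
    have hwc : WeakCXp κ v c (X')ᶜ := ⟨x, fun j hj => hx j (by simpa using hj), hxc⟩
    obtain ⟨Y', hY'sub, hY'⟩ := exists_cxp_subset κ v c _ (X')ᶜ rfl hwc
    obtain ⟨i, hiX', hiY'⟩ := hHS Y' hY'
    exact hY'sub hiY' hiX'
end

section
/- Every CXp is a minimal hitting set of the set of AXps: if Y is a subset-minimal weak CXp for (v, c), then Y is a minimal hitting set of the collection of all subset-minimal weak AXps for (v, c). -/
lemma exists_axp_subset {m : ℕ} (κ : (Fin m → Bool) → Bool) (v : Fin m → Bool)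
    (c : Bool) (X : Set (Fin m)) (hX : WeakAXp κ v c X) :
    ∃ X' ⊆ X, AXp κ v c X' := by
  generalize hn : X.ncard = n at *
  induction n using Nat.strong_induction_on generalizing X with
  | _ n ih =>
    by_cases h : ∀ Z ⊂ X, ¬ WeakAXp κ v c Z
    · exact ⟨X, le_refl _, hX, h⟩
    · push_neg at h
      obtain ⟨Z, hZX, hZ⟩ := h
      obtain ⟨X', hX'Z, hX'⟩ := ih Z.ncard
        (hn ▸ Set.ncard_lt_ncard hZX (Set.toFinite X)) Z hZ rfl
      exact ⟨X', hX'Z.trans hZX.subset, hX'⟩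

theorem cxp_is_minimal_hitting_set_of_axps {m : ℕ} (κ : (Fin m → Bool) → Bool)
    (v : Fin m → Bool) (c : Bool) (hv : κ v = c)
    (Y : Set (Fin m)) (hY : CXp κ v c Y) :
    HittingSet {X | AXp κ v c X} Y ∧
      ∀ Y' ⊂ Y, ¬ HittingSet {X | AXp κ v c X} Y' := by
  obtain ⟨⟨x, hx, hxc⟩, hmin⟩ := hY
  constructor
  · intro X hX
    by_contra hne
    rw [Set.not_nonempty_iff_eq_empty] at hne
    exact hxc (hX.1 x (fun i hi => hx i (fun hiY =>
      Set.eq_empty_iff_forall_notMem.mp hne i ⟨hiY, hi⟩)))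
  · intro Y' hY' hhit
    have hweak : WeakAXp κ v c Y'ᶜ := by
      intro x hx
      by_contra hxc'
      exact hmin Y' hY' ⟨x, fun j hj => hx j hj, hxc'⟩
    obtain ⟨X', hX'sub, hX'⟩ := exists_axp_subset κ v c Y'ᶜ hweak
    obtain ⟨i, hiY', hiX'⟩ := hhit X' hX'
    exact hX'sub hiX' hiY'
end
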